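/- Let h(x) = x log x − x + 1 (with h(0) = 1) and let 0 < r ≤ 1 satisfy h(x) ≥ h(r) + (−h'(r)/(2r))·((max(2r−x,0))² − r²) for all x ∈ [0,1]. Then every symmetric measurable W : [0,1]² → [0,1] with t(K₃, W) ≤ r³ satisfies ∫∫ h(W(x,y)) dx dy ≥ h(r). -/

import Mathlib

/-!
Put `U = max (2r - W) 0`, so that `0 ≤ 2r - U ≤ W` and hence `t(K₃, 2r - U) ≤ r³`. Expanding the
cube, `t(K₃, c - U) = c³ - 3c²s + 3cP - t(K₃, U)`, where `s = ∫ d` and `P = ∫ d²` are the first two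
moments of the degree function `d x = ∫ U x y dy` (symmetry of `U` makes the three one-edge terms,
and the three two-edge terms, equal). Cauchy–Schwarz gives `s² ≤ P ≤ ‖U‖₂²` and
`t(K₃, U) ≤ ‖U‖₂³`, and these bounds yield `t(K₃, c - U) ≥ (c - ‖U‖₂)³` as soon as `2‖U‖₂ ≤ c`.
For `c = 2r` this forces `‖U‖₂ ≥ r`, and integrating the assumed tangent inequality
`h(W) ≥ h(r) + (-h'(r)/2r)(U² - r²)` gives `∫∫ h(W) ≥ h(r)`.
-/

open MeasureTheory Real

noncomputable section

def I01 : Set ℝ := Set.Icc 0 1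

/-- Triangle density of a kernel `W`. -/
def tK3 (W : ℝ → ℝ → ℝ) : ℝ :=
  ∫ x in I01, ∫ y in I01, ∫ z in I01, W x y * W x z * W y z

/-- The function `h(x) = x log x - x + 1` (with `h(0) = 1` since `Real.log 0 = 0`). -/
def hfun (x : ℝ) : ℝ := x * Real.log x - x + 1

open Function
open scoped ENNReal

section CauchySchwarz

variable {β : Type*} [MeasurableSpace β] {ν : Measure β}

theorem integral_mul_sq_le_sq_mul_sq {f g : β → ℝ} (hf : MemLp f 2 ν) (hg : MemLp g 2 ν) :
    (∫ x, f x * g x ∂ν) ^ 2 ≤ (∫ x, f x ^ 2 ∂ν) * ∫ x, g x ^ 2 ∂ν := by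
  have hf2 := hf.integrable_sq
  have hg2 := hg.integrable_sq
  have hfg : Integrable (fun x => f x * g x) ν := hf.integrable_mul hg
  have hquad : ∀ t : ℝ, 0 ≤ (∫ x, f x ^ 2 ∂ν) * (t * t) + 2 * (∫ x, f x * g x ∂ν) * t
      + ∫ x, g x ^ 2 ∂ν := fun t => by
    have hexp : ∫ x, (t * f x + g x) ^ 2 ∂ν
        = ∫ x, t ^ 2 * f x ^ 2 + 2 * t * (f x * g x) + g x ^ 2 ∂ν :=
      integral_congr_ae (ae_of_all _ fun x => by ring)
    have hnonneg : 0 ≤ ∫ x, (t * f x + g x) ^ 2 ∂ν :=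
      integral_nonneg fun x => sq_nonneg _
    rw [hexp, integral_add (by fun_prop) hg2, integral_add (by fun_prop) (by fun_prop),
      integral_const_mul, integral_const_mul] at hnonneg
    linarith
  have := discrim_le_zero hquad
  rw [discrim] at this
  linarith

end CauchySchwarz

section TripleFubini

variable {α β γ : Type*} [MeasurableSpace α] [MeasurableSpace β] [MeasurableSpace γ]
  {μ : Measure α} {ν : Measure β} {ρ : Measure γ} [SFinite μ] [SFinite ν] [SFinite ρ]
  {g : α × β × γ → ℝ}

theorem integral_prod_prod (hg : Integrable g (μ.prod (ν.prod ρ))) :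
    ∫ q, g q ∂μ.prod (ν.prod ρ) = ∫ x, ∫ y, ∫ z, g (x, y, z) ∂ρ ∂ν ∂μ := by
  rw [integral_prod _ hg]
  exact integral_congr_ae (hg.prod_right_ae.mono fun x hx => integral_prod _ hx)

theorem integral_prod_prod_symm (hg : Integrable g (μ.prod (ν.prod ρ))) :
    ∫ q, g q ∂μ.prod (ν.prod ρ) = ∫ y, ∫ z, ∫ x, g (x, y, z) ∂μ ∂ρ ∂ν := by
  rw [integral_prod_symm _ hg]
  exact integral_prod _ hg.integral_prod_right

theorem integral_prod_prod_rev (hg : Integrable g (μ.prod (ν.prod ρ))) :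
    ∫ q, g q ∂μ.prod (ν.prod ρ) = ∫ z, ∫ y, ∫ x, g (x, y, z) ∂μ ∂ν ∂ρ := by
  rw [integral_prod_symm _ hg]
  exact integral_prod_symm _ hg.integral_prod_right

end TripleFubini

section ProbabilitySpace

variable {β : Type*} [MeasurableSpace β] {ν : Measure β} [IsProbabilityMeasure ν]

theorem integral_const_sub_mul_const_sub_mul_const_sub {a b e : β → ℝ} (ha : MemLp a ⊤ ν)
    (hb : MemLp b ⊤ ν) (he : MemLp e ⊤ ν) (c : ℝ) :
    ∫ q, (c - a q) * (c - b q) * (c - e q) ∂ν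
      = c ^ 3 - c ^ 2 * (∫ q, a q ∂ν + ∫ q, b q ∂ν + ∫ q, e q ∂ν)
        + c * (∫ q, a q * b q ∂ν + ∫ q, a q * e q ∂ν + ∫ q, b q * e q ∂ν)
        - ∫ q, a q * b q * e q ∂ν := by
  have ia := ha.integrable le_top
  have ib := hb.integrable le_top
  have ie := he.integrable le_top
  have iab := (hb.mul' (r := ⊤) ha).integrable le_top
  have iae := (he.mul' (r := ⊤) ha).integrable le_top
  have ibe := (he.mul' (r := ⊤) hb).integrable le_top
  have iabe := (he.mul' (r := ⊤) (hb.mul' (r := ⊤) ha)).integrable le_top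
  have hlin : Integrable (fun q => c ^ 2 * (a q + b q + e q)) ν := by fun_prop
  have hquad : Integrable (fun q => c * (a q * b q + a q * e q + b q * e q)) ν := by fun_prop
  calc ∫ q, (c - a q) * (c - b q) * (c - e q) ∂ν
      = ∫ q, c ^ 3 - c ^ 2 * (a q + b q + e q) + c * (a q * b q + a q * e q + b q * e q)
          - a q * b q * e q ∂ν := integral_congr_ae (ae_of_all _ fun q => by ring)
    _ = _ := by
      rw [integral_sub (by fun_prop) iabe, integral_add (by fun_prop) hquad,
        integral_sub (by fun_prop) hlin, integral_const_mul, integral_const_mul,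
        integral_add (by fun_prop) ie, integral_add ia ib, integral_add (by fun_prop) ibe,
        integral_add iab iae]
      simp

theorem sq_integral_le_integral_sq {f : β → ℝ} (hf : MemLp f 2 ν) :
    (∫ x, f x ∂ν) ^ 2 ≤ ∫ x, f x ^ 2 ∂ν := by
  simpa using integral_mul_sq_le_sq_mul_sq hf (memLp_const (1 : ℝ))

theorem le_integral_of_forall_const_add_mul_sub_le {f g : β → ℝ} (hf : Integrable f ν)
    (hg : Integrable g ν) {a b t : ℝ} (hb : 0 ≤ b) (ht : t ≤ ∫ x, f x ∂ν)
    (hfg : ∀ x, a + b * (f x - t) ≤ g x) : a ≤ ∫ x, g x ∂ν := by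
  have hminorant : Integrable (fun x => a + b * (f x - t)) ν := by fun_prop
  calc a ≤ a + b * ((∫ x, f x ∂ν) - t) :=
        le_add_of_nonneg_right (mul_nonneg hb (sub_nonneg.2 ht))
    _ = ∫ x, a + b * (f x - t) ∂ν := by
      rw [integral_add (integrable_const _) (by fun_prop), integral_const_mul,
        integral_sub hf (integrable_const _)]
      simp
    _ ≤ ∫ x, g x ∂ν := integral_mono hminorant hg hfg

end ProbabilitySpace

section Kernel

variable {α : Type*} [MeasurableSpace α] {μ : Measure α} [IsProbabilityMeasure μ]
  {U : α → α → ℝ} {C : ℝ}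

def triangleDensity (μ : Measure α) (U : α → α → ℝ) : ℝ :=
  ∫ q, U q.1 q.2.1 * U q.1 q.2.2 * U q.2.1 q.2.2 ∂μ.prod (μ.prod μ)

def degree (μ : Measure α) (U : α → α → ℝ) (x : α) : ℝ := ∫ y, U x y ∂μ

theorem memLp_comp_kernel (hU : Measurable (uncurry U)) (hUb : ∀ x y, |U x y| ≤ C)
    {β : Type*} [MeasurableSpace β] {ν : Measure β} [IsFiniteMeasure ν] {f g : β → α}
    (hf : Measurable f) (hg : Measurable g) (p : ℝ≥0∞) : MemLp (fun b => U (f b) (g b)) p ν :=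
  .of_bound (hU.comp (hf.prodMk hg)).aestronglyMeasurable C (ae_of_all _ fun _ => hUb _ _)

theorem integrable_triangle (hU : Measurable (uncurry U)) (hUb : ∀ x y, |U x y| ≤ C) :
    Integrable (fun q : α × α × α => U q.1 q.2.1 * U q.1 q.2.2 * U q.2.1 q.2.2)
      (μ.prod (μ.prod μ)) := by
  have ha := memLp_comp_kernel (ν := μ.prod (μ.prod μ)) hU hUb measurable_fst
    (measurable_fst.comp measurable_snd) ⊤
  have hb := memLp_comp_kernel (ν := μ.prod (μ.prod μ)) hU hUb measurable_fst
    (measurable_snd.comp measurable_snd) ⊤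
  have he := memLp_comp_kernel (ν := μ.prod (μ.prod μ)) hU hUb
    (measurable_fst.comp measurable_snd) (measurable_snd.comp measurable_snd) ⊤
  exact (he.mul' (r := ⊤) (hb.mul' (r := ⊤) ha)).integrable le_top

theorem triangleDensity_const_sub (hU : Measurable (uncurry U)) (hUb : ∀ x y, |U x y| ≤ C)
    (hsymm : ∀ x y, U x y = U y x) (c : ℝ) :
    triangleDensity μ (fun x y => c - U x y) = c ^ 3 - 3 * c ^ 2 * ∫ x, degree μ U x ∂μ
      + 3 * c * ∫ x, degree μ U x ^ 2 ∂μ - triangleDensity μ U := by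
  have ha : MemLp (fun q : α × α × α => U q.1 q.2.1) ⊤ (μ.prod (μ.prod μ)) :=
    memLp_comp_kernel hU hUb (by fun_prop) (by fun_prop) ⊤
  have hb : MemLp (fun q : α × α × α => U q.1 q.2.2) ⊤ (μ.prod (μ.prod μ)) :=
    memLp_comp_kernel hU hUb (by fun_prop) (by fun_prop) ⊤
  have he : MemLp (fun q : α × α × α => U q.2.1 q.2.2) ⊤ (μ.prod (μ.prod μ)) :=
    memLp_comp_kernel hU hUb (by fun_prop) (by fun_prop) ⊤
  have hcol : ∀ y, ∫ x, U x y ∂μ = degree μ U y := fun y =>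
    integral_congr_ae (ae_of_all _ fun x => hsymm x y)
  have hxy : ∫ q, U q.1 q.2.1 ∂μ.prod (μ.prod μ) = ∫ x, degree μ U x ∂μ := by
    rw [integral_prod_prod (ha.integrable le_top)]; simp [degree]
  have hxz : ∫ q, U q.1 q.2.2 ∂μ.prod (μ.prod μ) = ∫ x, degree μ U x ∂μ := by
    rw [integral_prod_prod (hb.integrable le_top)]; simp [degree]
  have hyz : ∫ q, U q.2.1 q.2.2 ∂μ.prod (μ.prod μ) = ∫ x, degree μ U x ∂μ := by
    rw [integral_prod_prod (he.integrable le_top)]; simp [degree]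
  have hxy_xz : ∫ q, U q.1 q.2.1 * U q.1 q.2.2 ∂μ.prod (μ.prod μ)
        = ∫ x, degree μ U x ^ 2 ∂μ := by
    rw [integral_prod_prod ((hb.mul' (r := ⊤) ha).integrable le_top)]
    simp [degree, integral_const_mul, integral_mul_const, sq]
  have hxy_yz : ∫ q, U q.1 q.2.1 * U q.2.1 q.2.2 ∂μ.prod (μ.prod μ)
        = ∫ x, degree μ U x ^ 2 ∂μ := by
    rw [integral_prod_prod_symm ((he.mul' (r := ⊤) ha).integrable le_top)]
    simp [integral_mul_const, hcol, integral_const_mul, degree, sq]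
  have hxz_yz : ∫ q, U q.1 q.2.2 * U q.2.1 q.2.2 ∂μ.prod (μ.prod μ)
        = ∫ x, degree μ U x ^ 2 ∂μ := by
    rw [integral_prod_prod_rev ((he.mul' (r := ⊤) hb).integrable le_top)]
    simp [integral_mul_const, hcol, integral_const_mul, degree, sq]
  rw [triangleDensity, integral_const_sub_mul_const_sub_mul_const_sub ha hb he, hxy, hxz, hyz,
    hxy_xz, hxy_yz, hxz_yz, triangleDensity]
  ring

theorem triangleDensity_sq_le (hU : Measurable (uncurry U)) (hUb : ∀ x y, |U x y| ≤ C) :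
    triangleDensity μ U ^ 2 ≤ (∫ p, U p.1 p.2 ^ 2 ∂μ.prod μ) ^ 3 := by
  set Q := ∫ p, U p.1 p.2 ^ 2 ∂μ.prod μ
  set F : α × α → ℝ := fun p => ∫ x, U x p.1 * U x p.2 ∂μ
  set D : α → ℝ := fun y => ∫ x, U x y ^ 2 ∂μ
  have hU2 : MemLp (fun p : α × α => U p.1 p.2) 2 (μ.prod μ) :=
    memLp_comp_kernel hU hUb measurable_fst measurable_snd 2
  have hD : Integrable D μ := hU2.integrable_sq.integral_prod_right
  have hDQ : ∫ y, D y ∂μ = Q := (integral_prod_symm _ hU2.integrable_sq).symm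
  have hFD : ∀ p, F p ^ 2 ≤ D p.1 * D p.2 := fun p =>
    integral_mul_sq_le_sq_mul_sq (memLp_comp_kernel hU hUb measurable_id measurable_const 2)
      (memLp_comp_kernel hU hUb measurable_id measurable_const 2)
  have hF : MemLp F 2 (μ.prod μ) := by
    have hcherry : Integrable (fun q : α × α × α => U q.1 q.2.1 * U q.1 q.2.2)
        (μ.prod (μ.prod μ)) :=
      ((memLp_comp_kernel hU hUb (by fun_prop) (by fun_prop) ⊤).mul' (r := ⊤)
        (memLp_comp_kernel hU hUb (by fun_prop) (by fun_prop) ⊤)).integrable le_top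
    have hFm : AEStronglyMeasurable F (μ.prod μ) :=
      hcherry.integral_prod_right.aestronglyMeasurable
    refine (memLp_two_iff_integrable_sq hFm).2 ((hD.mul_prod hD).mono' (hFm.pow 2) ?_)
    exact ae_of_all _ fun p => by
      rw [Real.norm_eq_abs, abs_of_nonneg (sq_nonneg _)]; exact hFD p
  have hF2 : ∫ p, F p ^ 2 ∂μ.prod μ ≤ Q ^ 2 :=
    calc ∫ p, F p ^ 2 ∂μ.prod μ ≤ ∫ p, D p.1 * D p.2 ∂μ.prod μ :=
          integral_mono_of_nonneg (ae_of_all _ fun p => sq_nonneg _) (hD.mul_prod hD)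
            (ae_of_all _ hFD)
      _ = Q ^ 2 := by rw [integral_prod_mul, hDQ, sq]
  have hT : triangleDensity μ U = ∫ p, F p * U p.1 p.2 ∂μ.prod μ := by
    rw [triangleDensity, integral_prod_symm _ (integrable_triangle hU hUb)]
    simp only [integral_mul_const, F]
  calc triangleDensity μ U ^ 2 ≤ (∫ p, F p ^ 2 ∂μ.prod μ) * Q :=
        hT ▸ integral_mul_sq_le_sq_mul_sq hF hU2
    _ ≤ Q ^ 2 * Q := mul_le_mul_of_nonneg_right hF2 (integral_nonneg fun _ => sq_nonneg _)
    _ = Q ^ 3 := by ring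

theorem sq_degree_le (hU : Measurable (uncurry U)) (hUb : ∀ x y, |U x y| ≤ C) (x : α) :
    degree μ U x ^ 2 ≤ ∫ y, U x y ^ 2 ∂μ :=
  sq_integral_le_integral_sq (memLp_comp_kernel hU hUb measurable_const measurable_id 2)

theorem memLp_degree (hU : Measurable (uncurry U)) (hUb : ∀ x y, |U x y| ≤ C) :
    MemLp (degree μ U) 2 μ := by
  have hU2 : MemLp (fun p : α × α => U p.1 p.2) 2 (μ.prod μ) :=
    memLp_comp_kernel hU hUb measurable_fst measurable_snd 2
  have hdm : AEStronglyMeasurable (degree μ U) μ :=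
    (hU2.integrable one_le_two).integral_prod_left.aestronglyMeasurable
  refine (memLp_two_iff_integrable_sq hdm).2
    (hU2.integrable_sq.integral_prod_left.mono' (hdm.pow 2) (ae_of_all _ fun x => ?_))
  rw [Real.norm_eq_abs, abs_of_nonneg (sq_nonneg _)]
  exact sq_degree_le hU hUb x

theorem integral_degree_sq_le (hU : Measurable (uncurry U)) (hUb : ∀ x y, |U x y| ≤ C) :
    ∫ x, degree μ U x ^ 2 ∂μ ≤ ∫ p, U p.1 p.2 ^ 2 ∂μ.prod μ := by
  have hU2 := (memLp_comp_kernel (ν := μ.prod μ) hU hUb measurable_fst measurable_snd 2)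
  rw [integral_prod _ hU2.integrable_sq]
  exact integral_mono_of_nonneg (ae_of_all _ fun x => sq_nonneg _)
    hU2.integrable_sq.integral_prod_left (ae_of_all _ (sq_degree_le hU hUb))

theorem cube_sub_sqrt_le_triangleDensity_const_sub (hU : Measurable (uncurry U))
    (hUb : ∀ x y, |U x y| ≤ C) (hsymm : ∀ x y, U x y = U y x) {c : ℝ}
    (hc : 2 * √(∫ p, U p.1 p.2 ^ 2 ∂μ.prod μ) ≤ c) :
    (c - √(∫ p, U p.1 p.2 ^ 2 ∂μ.prod μ)) ^ 3 ≤ triangleDensity μ (fun x y => c - U x y) := by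
  set Q := ∫ p, U p.1 p.2 ^ 2 ∂μ.prod μ
  set q := √Q
  set s := ∫ x, degree μ U x ∂μ
  set P := ∫ x, degree μ U x ^ 2 ∂μ
  have hq : 0 ≤ q := sqrt_nonneg Q
  have hc0 : 0 ≤ c := by linarith
  have hqQ : q ^ 2 = Q := sq_sqrt (integral_nonneg fun _ => sq_nonneg _)
  have hsP : s ^ 2 ≤ P := sq_integral_le_integral_sq (memLp_degree hU hUb)
  have hsq : s ≤ q :=
    (le_abs_self s).trans (abs_le_sqrt (hsP.trans (integral_degree_sq_le hU hUb)))
  have hT : triangleDensity μ U ≤ q ^ 3 := by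
    refine (abs_le_of_sq_le_sq' ?_ (by positivity)).2
    rw [← pow_mul, mul_comm, pow_mul, hqQ]
    exact triangleDensity_sq_le hU hUb
  rw [triangleDensity_const_sub hU hUb hsymm]
  -- the slack is `3c(P - s²) + 3c(q - s)(c - s - q) + (q³ - t(K₃, U))`
  nlinarith [mul_le_mul_of_nonneg_left hsP hc0,
    mul_nonneg (mul_nonneg hc0 (sub_nonneg.2 hsq)) (by linarith : 0 ≤ c - s - q)]

theorem le_sqrt_of_triangleDensity_two_mul_sub_le (hU : Measurable (uncurry U))
    (hUb : ∀ x y, |U x y| ≤ C) (hsymm : ∀ x y, U x y = U y x) {r : ℝ}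
    (h : triangleDensity μ (fun x y => 2 * r - U x y) ≤ r ^ 3) :
    r ≤ √(∫ p, U p.1 p.2 ^ 2 ∂μ.prod μ) := by
  by_contra! hlt
  have hq := sqrt_nonneg (∫ p, U p.1 p.2 ^ 2 ∂μ.prod μ)
  have hcube :=
    cube_sub_sqrt_le_triangleDensity_const_sub hU hUb hsymm (c := 2 * r) (by linarith)
  have : r ^ 3 < (2 * r - √(∫ p, U p.1 p.2 ^ 2 ∂μ.prod μ)) ^ 3 :=
    pow_lt_pow_left₀ (by linarith) (by linarith) three_ne_zero
  linarith

theorem triangleDensity_mono {V W : α → α → ℝ} (hV : ∀ x y, 0 ≤ V x y)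
    (hVW : ∀ x y, V x y ≤ W x y) (hW : Measurable (uncurry W)) (hWb : ∀ x y, |W x y| ≤ C) :
    triangleDensity μ V ≤ triangleDensity μ W :=
  integral_mono_of_nonneg
    (ae_of_all _ fun _ => mul_nonneg (mul_nonneg (hV _ _) (hV _ _)) (hV _ _))
    (integrable_triangle hW hWb) (ae_of_all _ fun _ =>
      mul_le_mul (mul_le_mul (hVW _ _) (hVW _ _) (hV _ _) ((hV _ _).trans (hVW _ _))) (hVW _ _)
        (hV _ _) (mul_nonneg ((hV _ _).trans (hVW _ _)) ((hV _ _).trans (hVW _ _))))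

end Kernel

instance : IsProbabilityMeasure (volume.restrict I01) := ⟨by simp [I01]⟩

theorem tK3_eq_triangleDensity {W : ℝ → ℝ → ℝ} {C : ℝ} (hW : Measurable (uncurry W))
    (hWb : ∀ x y, |W x y| ≤ C) : tK3 W = triangleDensity (volume.restrict I01) W :=
  (integral_prod_prod (integrable_triangle hW hWb)).symm

theorem measurable_hfun : Measurable hfun := by
  unfold hfun; fun_prop

theorem hfun_mem_Icc {w : ℝ} (hw : w ∈ Set.Icc (0 : ℝ) 1) : hfun w ∈ Set.Icc (0 : ℝ) 1 := by
  obtain ⟨hw0, hw1⟩ := hw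
  refine ⟨?_, by linarith [mul_log_nonpos hw0 hw1, show hfun w = w * log w - w + 1 from rfl]⟩
  rcases hw0.eq_or_lt with rfl | hpos
  · simp [hfun]
  · have := mul_le_mul_of_nonneg_left (one_sub_inv_le_log_of_pos hpos) hw0
    rw [mul_sub, mul_one, mul_inv_cancel₀ hpos.ne'] at this
    simp only [hfun]; linarith

theorem integrable_hfun_comp {β : Type*} [MeasurableSpace β] {ν : Measure β}
    [IsFiniteMeasure ν] {f : β → ℝ} (hf : Measurable f) (hrange : ∀ b, f b ∈ Set.Icc (0 : ℝ) 1) :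
    Integrable (fun b => hfun (f b)) ν :=
  .of_bound (measurable_hfun.comp hf).aestronglyMeasurable 1 (ae_of_all _ fun b => by
    obtain ⟨h0, h1⟩ := hfun_mem_Icc (hrange b)
    rw [Real.norm_eq_abs, abs_le]
    exact ⟨by linarith, h1⟩)

theorem stmt_6 (r : ℝ) (hr0 : 0 < r) (hr1 : r ≤ 1)
    (htangent : ∀ x ∈ Set.Icc (0 : ℝ) 1,
      hfun x ≥ hfun r + (-Real.log r / (2 * r)) * ((max (2 * r - x) 0) ^ 2 - r ^ 2))
    (W : ℝ → ℝ → ℝ)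
    (hrange : ∀ x y, W x y ∈ Set.Icc (0 : ℝ) 1)
    (hsymm : ∀ x y, W x y = W y x)
    (hmeas : Measurable (Function.uncurry W))
    (ht : tK3 W ≤ r ^ 3) :
    (∫ x in I01, ∫ y in I01, hfun (W x y)) ≥ hfun r := by
  set μ := volume.restrict I01
  set U : ℝ → ℝ → ℝ := fun x y => max (2 * r - W x y) 0
  have hWb : ∀ x y, |W x y| ≤ 1 := fun x y =>
    abs_le.2 ⟨by linarith [(hrange x y).1], (hrange x y).2⟩
  have hU : Measurable (uncurry U) := (measurable_const.sub hmeas).max measurable_const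
  have hUb : ∀ x y, |U x y| ≤ 2 * r := fun x y =>
    abs_le.2 ⟨by linarith [le_max_right (2 * r - W x y) 0],
      max_le (by linarith [(hrange x y).1]) (by linarith)⟩
  have hr : r ≤ √(∫ p, U p.1 p.2 ^ 2 ∂μ.prod μ) := by
    refine le_sqrt_of_triangleDensity_two_mul_sub_le hU hUb
      (fun x y => by simp only [U, hsymm x y]) ?_
    calc triangleDensity μ (fun x y => 2 * r - U x y) ≤ triangleDensity μ W :=
          triangleDensity_mono (fun x y => sub_nonneg.2 (abs_le.1 (hUb x y)).2)
            (fun x y => sub_le_comm.1 (le_max_left _ _)) hmeas hWb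
      _ = tK3 W := (tK3_eq_triangleDensity hmeas hWb).symm
      _ ≤ r ^ 3 := ht
  have hc : 0 ≤ -log r / (2 * r) :=
    div_nonneg (neg_nonneg.2 (log_nonpos hr0.le hr1)) (by positivity)
  have hhW : Integrable (fun p : ℝ × ℝ => hfun (W p.1 p.2)) (μ.prod μ) :=
    integrable_hfun_comp hmeas fun p => hrange p.1 p.2
  calc hfun r ≤ ∫ p, hfun (W p.1 p.2) ∂μ.prod μ :=
        le_integral_of_forall_const_add_mul_sub_le
          (memLp_comp_kernel hU hUb measurable_fst measurable_snd 2).integrable_sq hhW hc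
          ((le_sqrt hr0.le (integral_nonneg fun _ => sq_nonneg _)).1 hr)
          fun p => htangent _ (hrange p.1 p.2)
    _ = ∫ x in I01, ∫ y in I01, hfun (W x y) := integral_prod _ hhW
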